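/- Let H be a group, let A be a subgroup of the center Z(H) of H, and suppose G = H/A is finite. Let F be a free group with a surjective homomorphism φ: F → H, and let T = φ⁻¹(A), so that F with the induced surjection F → G is a free presentation of G with kernel T. Then [H,H] ∩ A is isomorphic to a subgroup of the Schur multiplier M(G) of G: there exists an injective group homomorphism from [H,H] ∩ A into (T ∩ [F,F]) / [T,F]. -/

import Mathlib

open scoped commutatorElement

private lemma comm_central_left {G : Type*} [Group G] {z : G} (hz : z ∈ Subgroup.center G)
    (a b : G) : ⁅a * z, b⁆ = ⁅a, b⁆ := by
  have h : ∀ g : G, z * g = g * z := fun g => (Subgroup.mem_center_iff.mp hz g).symm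
  have hinv : ∀ g : G, z⁻¹ * g = g * z⁻¹ := fun g => by
    rw [eq_comm, mul_inv_eq_iff_eq_mul, mul_assoc, ← h g, inv_mul_cancel_left]
  simp only [commutatorElement_def, mul_inv_rev, mul_assoc]
  rw [h]
  simp only [mul_assoc]
  rw [hinv]
  simp [mul_assoc]

private lemma comm_central {G : Type*} [Group G] {z w : G} (hz : z ∈ Subgroup.center G)
    (hw : w ∈ Subgroup.center G) (a b : G) : ⁅a * z, b * w⁆ = ⁅a, b⁆ := by
  rw [comm_central_left hz, ← commutatorElement_inv, comm_central_left hw,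
    commutatorElement_inv]

private lemma finite_commutatorSet_of_le_center {G : Type*} [Group G] (Z : Subgroup G)
    [Z.Normal] (hZ : Z ≤ Subgroup.center G) [Finite (G ⧸ Z)] :
    Finite (commutatorSet G) := by
  have hsub : commutatorSet G ⊆ Set.range
      (fun p : (G ⧸ Z) × (G ⧸ Z) => ⁅p.1.out, p.2.out⁆) := by
    rintro - ⟨a, b, rfl⟩
    refine ⟨(QuotientGroup.mk a, QuotientGroup.mk b), ?_⟩
    have ha : a⁻¹ * (QuotientGroup.mk a : G ⧸ Z).out ∈ Z := by
      rw [← QuotientGroup.eq]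
      exact (QuotientGroup.out_eq' _).symm
    have hb : b⁻¹ * (QuotientGroup.mk b : G ⧸ Z).out ∈ Z := by
      rw [← QuotientGroup.eq]
      exact (QuotientGroup.out_eq' _).symm
    have : ⁅a * (a⁻¹ * (QuotientGroup.mk a : G ⧸ Z).out),
        b * (b⁻¹ * (QuotientGroup.mk b : G ⧸ Z).out)⁆ = ⁅a, b⁆ :=
      comm_central (hZ ha) (hZ hb) a b
    simpa [mul_inv_cancel_left] using this
  exact Set.Finite.subset (Set.finite_range _) hsub |>.to_subtype

private lemma exists_injective_of_surjective {M Q : Type*} [CommGroup M] [CommGroup Q]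
    [Finite M] [Finite Q] (f : M →* Q) (hf : Function.Surjective f) :
    ∃ g : Q →* M, Function.Injective g := by
  haveI : NeZero (Monoid.exponent M) := ⟨Monoid.exponent_ne_zero_of_finite⟩
  haveI : NeZero (Monoid.exponent Q) := ⟨Monoid.exponent_ne_zero_of_finite⟩
  haveI : NeZero ((Monoid.exponent M : ℂ)) := ⟨Nat.cast_ne_zero.mpr (NeZero.ne _)⟩
  haveI : NeZero ((Monoid.exponent Q : ℂ)) := ⟨Nat.cast_ne_zero.mpr (NeZero.ne _)⟩
  obtain ⟨eM⟩ := CommGroup.monoidHom_mulEquiv_of_hasEnoughRootsOfUnity M ℂ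
  obtain ⟨eQ⟩ := CommGroup.monoidHom_mulEquiv_of_hasEnoughRootsOfUnity Q ℂ
  let d : (Q →* ℂˣ) →* (M →* ℂˣ) :=
    { toFun := fun g => g.comp f
      map_one' := by ext; simp
      map_mul' := fun g₁ g₂ => by ext; simp }
  have hd : Function.Injective d := by
    intro g₁ g₂ h
    ext q
    obtain ⟨m, rfl⟩ := hf q
    exact congrArg Units.val (DFunLike.congr_fun h m)
  exact ⟨(eM.toMonoidHom.comp d).comp eQ.symm.toMonoidHom,
    (eM.injective.comp hd).comp eQ.symm.injective⟩

/-- `iteratedCommutator H c` is the subgroup `[H, G, …, G]` (`c` copies of `G`). -/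
def iteratedCommutator {G : Type*} [Group G] (H : Subgroup G) : ℕ → Subgroup G
  | 0 => H
  | n + 1 => ⁅iteratedCommutator H n, (⊤ : Subgroup G)⁆

instance iteratedCommutator_normal {G : Type*} [Group G] (H : Subgroup G) [hH : H.Normal] :
    ∀ n, (iteratedCommutator H n).Normal
  | 0 => hH
  | n + 1 => letI := iteratedCommutator_normal H n; Subgroup.commutator_normal _ _

/-- The Baer invariant `𝒩_cM(G) = (T ∩ γ_{c+1}(F)) / [T, F, …, F]` (`c` copies of `F`),
computed from a free presentation of `G` with kernel `T` inside the free group `F`,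
realized as a subgroup of `F ⧸ [T, F, …, F]`. -/
def baerInvariant {F : Type*} [Group F] (c : ℕ) (T : Subgroup F) [T.Normal] :
    Subgroup (F ⧸ iteratedCommutator T c) :=
  Subgroup.map (QuotientGroup.mk' (iteratedCommutator T c)) (T ⊓ Subgroup.lowerCentralSeries (⊤ : Subgroup F) c)

/-- **Corollary 3.2 for the variety of abelian groups.**  If `A ≤ Z(H)` (hence `A ⊴ H`)
and `G = H/A` is finite, and `φ : F ↠ H` is a free presentation of `H` with `T = φ⁻¹(A)`
(so that `F → G` is a free presentation of `G` with kernel `T`), then `[H,H] ∩ A` embeds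
in the Schur multiplier `M(G) = (T ∩ [F,F]) / [T,F]` (which is `baerInvariant 1`). -/
theorem corollary_3_2_abelian
    {H : Type*} [Group H] (A : Subgroup H) [A.Normal]
    (hA : A ≤ Subgroup.center H) [Finite (H ⧸ A)]
    {F : Type*} [Group F] [IsFreeGroup F]
    (φ : F →* H) (hφ : Function.Surjective φ) :
    ∃ f : ↥(commutator H ⊓ A) →* ↥(baerInvariant 1 (A.comap φ)),
      Function.Injective f := by
  classical
  set T : Subgroup F := A.comap φ with hTdef
  set R : Subgroup F := iteratedCommutator T 1 with hRdef
  haveI hRn : R.Normal := iteratedCommutator_normal T 1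
  have hR1 : R = ⁅T, (⊤ : Subgroup F)⁆ := rfl
  -- `R ≤ ker φ`
  have hRker : ∀ x ∈ R, φ x = 1 := by
    have hle : R ≤ φ.ker := by
      rw [hR1, Subgroup.commutator_le]
      intro g₁ hg₁ g₂ _
      rw [MonoidHom.mem_ker, map_commutatorElement, commutatorElement_eq_one_iff_commute]
      exact (Subgroup.mem_center_iff.mp (hA hg₁) (φ g₂)).symm
    exact fun x hx => hle hx
  let χ : F ⧸ R →* H := QuotientGroup.lift R φ hRker
  -- the restricted map `π : baerInvariant → [H,H] ⊓ A`
  have hmem : ∀ m : ↥(baerInvariant 1 T), χ ((baerInvariant 1 T).subtype m) ∈ commutator H ⊓ A := by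
    rintro ⟨m, hm⟩
    obtain ⟨x, hx, rfl⟩ := hm
    have h1 : φ x ∈ Subgroup.map φ (commutator F) := ⟨x, (Subgroup.mem_inf.mp hx).2, rfl⟩
    rw [commutator_def, Subgroup.map_commutator] at h1
    exact Subgroup.mem_inf.mpr
      ⟨Subgroup.commutator_mono le_top le_top h1, (Subgroup.mem_inf.mp hx).1⟩
  let π : ↥(baerInvariant 1 T) →* ↥(commutator H ⊓ A) :=
    (χ.comp (baerInvariant 1 T).subtype).codRestrict _ hmem
  have hπ : Function.Surjective π := by
    rintro ⟨h, hh⟩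
    have hcom : commutator H = Subgroup.map φ (commutator F) := by
      rw [commutator_def, commutator_def, Subgroup.map_commutator,
        Subgroup.map_top_of_surjective φ hφ]
    have hc : h ∈ Subgroup.map φ (commutator F) := by
      rw [← hcom]; exact (Subgroup.mem_inf.mp hh).1
    obtain ⟨x, hxL, rfl⟩ := hc
    have hxT : x ∈ T := by
      rw [hTdef, Subgroup.mem_comap]
      exact (Subgroup.mem_inf.mp hh).2
    exact ⟨⟨QuotientGroup.mk' R x, ⟨x, Subgroup.mem_inf.mpr ⟨hxT, hxL⟩, rfl⟩⟩, rfl⟩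
  -- commutativity of the two groups
  letI instQ : CommGroup ↥(commutator H ⊓ A) :=
    { (inferInstance : Group ↥(commutator H ⊓ A)) with
      mul_comm := fun a b => Subtype.ext
        (Subgroup.mem_center_iff.mp (hA (Subgroup.mem_inf.mp a.2).2) b.1).symm }
  letI instM : CommGroup ↥(baerInvariant 1 T) :=
    { (inferInstance : Group ↥(baerInvariant 1 T)) with
      mul_comm := fun a b => by
        obtain ⟨x, hx, hxa⟩ := a.2
        obtain ⟨y, hy, hyb⟩ := b.2
        apply Subtype.ext
        show a.1 * b.1 = b.1 * a.1
        rw [← hxa, ← hyb, ← commutatorElement_eq_one_iff_mul_comm,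
          ← map_commutatorElement]
        rw [QuotientGroup.mk'_apply, QuotientGroup.eq_one_iff]
        exact Subgroup.commutator_mem_commutator (Subgroup.mem_inf.mp hx).1 (Subgroup.mem_top y) }
  -- finiteness of `[H,H] ⊓ A`
  haveI : Finite (commutatorSet H) := finite_commutatorSet_of_le_center A hA
  haveI : Finite ↥(commutator H) := inferInstance
  haveI : Finite ↥(commutator H ⊓ A) :=
    Finite.of_injective (Subgroup.inclusion (inf_le_left : commutator H ⊓ A ≤ commutator H))
      (Subgroup.inclusion_injective _)
  -- finiteness of the Baer invariant
  let T' : Subgroup (F ⧸ R) := Subgroup.map (QuotientGroup.mk' R) T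
  haveI hT'n : T'.Normal :=
    Subgroup.Normal.map inferInstance (QuotientGroup.mk' R) (QuotientGroup.mk'_surjective R)
  have hT'c : T' ≤ Subgroup.center (F ⧸ R) := by
    rintro - ⟨t, ht, rfl⟩
    rw [Subgroup.mem_center_iff]
    intro g
    induction g using QuotientGroup.induction_on with
    | H x =>
      have hmem2 : ⁅x, t⁆ ∈ R := by
        rw [hR1, ← commutatorElement_inv]
        exact Subgroup.inv_mem _
          (Subgroup.commutator_mem_commutator ht (Subgroup.mem_top x))
      have h1 : ((QuotientGroup.mk' R) ⁅x, t⁆) = 1 := by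
        rw [QuotientGroup.mk'_apply, QuotientGroup.eq_one_iff]
        exact hmem2
      rw [map_commutatorElement] at h1
      exact commutatorElement_eq_one_iff_mul_comm.mp h1
  -- `F ⧸ T` is finite
  have hψker : ((QuotientGroup.mk' A).comp φ).ker = T := by
    ext x
    simp [MonoidHom.mem_ker, QuotientGroup.eq_one_iff, hTdef, Subgroup.mem_comap]
  haveI : Finite (F ⧸ T) := by
    have hψ : Function.Surjective ((QuotientGroup.mk' A).comp φ) :=
      (QuotientGroup.mk'_surjective A).comp hφ
    exact Finite.of_equiv (H ⧸ A)
      (((QuotientGroup.quotientKerEquivOfSurjective _ hψ).symm.trans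
        (QuotientGroup.quotientMulEquivOfEq hψker)).toEquiv)
  -- hence `(F ⧸ R) ⧸ T'` is finite
  have hTδ : ∀ x ∈ T, ((QuotientGroup.mk' T').comp (QuotientGroup.mk' R)) x = 1 := by
    intro t ht
    rw [MonoidHom.comp_apply, QuotientGroup.mk'_apply, QuotientGroup.mk'_apply,
      QuotientGroup.eq_one_iff]
    exact ⟨t, ht, rfl⟩
  haveI : Finite ((F ⧸ R) ⧸ T') := by
    apply Finite.of_surjective
      (QuotientGroup.lift T ((QuotientGroup.mk' T').comp (QuotientGroup.mk' R)) hTδ)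
    intro k
    induction k using QuotientGroup.induction_on with
    | H y =>
      induction y using QuotientGroup.induction_on with
      | H x => exact ⟨QuotientGroup.mk x, rfl⟩
  -- Schur: the commutator subgroup of `F ⧸ R` is finite, and it contains the Baer invariant
  haveI : Finite (commutatorSet (F ⧸ R)) := finite_commutatorSet_of_le_center T' hT'c
  haveI : Finite ↥(commutator (F ⧸ R)) := inferInstance
  have hMle : baerInvariant 1 T ≤ commutator (F ⧸ R) := by
    rintro m hm
    obtain ⟨x, hx, rfl⟩ := hm
    have h1 : (QuotientGroup.mk' R) x ∈ Subgroup.map (QuotientGroup.mk' R) (commutator F) :=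
      ⟨x, (Subgroup.mem_inf.mp hx).2, rfl⟩
    rw [commutator_def, Subgroup.map_commutator] at h1
    exact Subgroup.commutator_mono le_top le_top h1
  haveI : Finite ↥(baerInvariant 1 T) :=
    Finite.of_injective (Subgroup.inclusion hMle) (Subgroup.inclusion_injective _)
  -- conclude by duality for finite abelian groups
  obtain ⟨g, hg⟩ := exists_injective_of_surjective π hπ
  exact ⟨g, hg⟩
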